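/- arXiv:2211.02155 — 2 statements merged into one kernel-verified Lean document; each statement's English description precedes it below -/
import Mathlib

section
/- For every n ≥ 2, the set {x, y, e_2, …, e_{n−1}} of n elements generates the monoid OCI_n; in particular xy = e_n and yx = e_1. -/
/-!
Common setup.  `Ω_n = {1, …, n}` is modelled by `Fin n`, where `a : Fin n`
represents the element `a + 1` of `Ω_n`.  Partial maps on `Ω_n` are modelled as
functions `Fin n → Option (Fin n)`, composed left-to-right (as in the paper),
which makes them a monoid (the monoid `PT_n` of all partial transformations).
-/

/-- Partial maps on `Ω_n`, composed left-to-right. -/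
abbrev PMap (n : ℕ) := Fin n → Option (Fin n)

instance PMap.instMonoid (n : ℕ) : Monoid (PMap n) where
  one := fun a => some a
  mul f g := fun a => (f a).bind g
  one_mul f := rfl
  mul_one f := funext fun a => by
    show (f a).bind (fun b => some b) = f a
    cases f a <;> rfl
  mul_assoc f g h := funext fun a => by
    show ((f a).bind g).bind h = (f a).bind (fun b => (g b).bind h)
    cases f a <;> rfl

/-- The cyclic permutation `g : i ↦ i + 1` (for `1 ≤ i ≤ n-1`), `n ↦ 1`, of `Ω_n`,
as a (total) partial map. -/
def gmap (n : ℕ) : PMap n := fun a => some (finRotate n a)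

/-- `emap n i` is the partial identity on `Ω_n ∖ {i}` (the map `e_i` of the paper);
recall that `a : Fin n` represents the element `a + 1` of `Ω_n = {1, …, n}`. -/
def emap (n i : ℕ) : PMap n := fun a => if (a : ℕ) + 1 = i then none else some a

/-- The cyclic inverse monoid `CI_n`, as the set of all restrictions of elements of
`C_n = {1, g, g², …}` (including the empty map). -/
def CIn (n : ℕ) : Set (PMap n) :=
  {f | ∃ k : ℕ, ∀ a : Fin n, f a ≠ none → f a = (gmap n ^ k) a}

/-- A partial map is order-preserving if it preserves `≤` on its domain. -/
def OrdPres {n : ℕ} (f : PMap n) : Prop :=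
  ∀ a b c d : Fin n, a ≤ b → f a = some c → f b = some d → c ≤ d

/-- `OCI_n`: the order-preserving elements of `CI_n`. -/
def OCIn (n : ℕ) : Set (PMap n) := {f | f ∈ CIn n ∧ OrdPres f}

/-- `x = g e_1`, the partial map with domain `{1, …, n-1}` sending `i ↦ i + 1`. -/
def xmap (n : ℕ) : PMap n := gmap n * emap n 1

/-- `y = x⁻¹`, the partial map with domain `{2, …, n}` sending `i ↦ i - 1`. -/
def ymap (n : ℕ) : PMap n := fun a =>
  if 1 ≤ (a : ℕ) then some ⟨(a : ℕ) - 1, Nat.lt_of_le_of_lt (Nat.sub_le _ _) a.isLt⟩ else none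

section Aux

lemma PMap.mul_apply {n : ℕ} (f g : PMap n) (a : Fin n) : (f * g) a = (f a).bind g := rfl

lemma PMap.one_apply {n : ℕ} (a : Fin n) : (1 : PMap n) a = some a := rfl

lemma finRotate_val' {n : ℕ} (a : Fin n) : (finRotate n a).val = (a.val + 1) % n := by
  rcases n with _ | m
  · exact a.elim0
  · rw [finRotate_succ_apply, Fin.val_add, Fin.val_one']
    conv_rhs => rw [Nat.add_mod]
    rw [Nat.mod_eq_of_lt a.isLt]

lemma rot_val {n : ℕ} (k : ℕ) (a : Fin n) :
    ((finRotate n)^[k] a).val = (a.val + k) % n := by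
  induction k with
  | zero => simp [Nat.mod_eq_of_lt a.isLt]
  | succ k ih =>
    rw [Function.iterate_succ_apply', finRotate_val', ih, Nat.mod_add_mod, Nat.add_assoc]

lemma gpow_apply {n : ℕ} (k : ℕ) (a : Fin n) :
    (gmap n ^ k) a = some ((finRotate n)^[k] a) := by
  induction k with
  | zero => rw [pow_zero]; rfl
  | succ k ih =>
    rw [pow_succ, PMap.mul_apply, ih, Function.iterate_succ_apply']
    rfl

lemma xmap_apply {n : ℕ} (a : Fin n) :
    xmap n a = if h : a.val + 1 < n then some ⟨a.val + 1, h⟩ else none := by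
  have key : xmap n a = if (finRotate n a).val + 1 = 1 then none else some (finRotate n a) := rfl
  rw [key]
  have hv := finRotate_val' a
  by_cases h : a.val + 1 < n
  · rw [Nat.mod_eq_of_lt h] at hv
    rw [dif_pos h, if_neg (by omega)]
    exact congrArg some (Fin.ext hv)
  · have hn1 : a.val + 1 = n := by have := a.isLt; omega
    rw [hn1, Nat.mod_self] at hv
    rw [dif_neg h, if_pos (by omega)]

lemma xpow_apply {n : ℕ} (s : ℕ) (a : Fin n) :
    (xmap n ^ s) a = if h : a.val + s < n then some ⟨a.val + s, h⟩ else none := by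
  induction s with
  | zero =>
    rw [pow_zero, dif_pos (by simpa using a.isLt)]
    rfl
  | succ s ih =>
    rw [pow_succ, PMap.mul_apply, ih]
    by_cases h : a.val + s < n
    · rw [dif_pos h]
      show xmap n _ = _
      rw [xmap_apply]
      by_cases h2 : a.val + (s + 1) < n
      · rw [dif_pos (show (⟨a.val + s, h⟩ : Fin n).val + 1 < n by simpa [Nat.add_assoc] using h2),
          dif_pos h2]
        exact congrArg some (Fin.ext (by simp [Nat.add_assoc]))
      · rw [dif_neg (show ¬ ((⟨a.val + s, h⟩ : Fin n).val + 1 < n) by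
            simpa [Nat.add_assoc] using h2), dif_neg h2]
    · rw [dif_neg h, dif_neg (by omega)]
      rfl

lemma ymap_apply {n : ℕ} (a : Fin n) :
    ymap n a = if h : 1 ≤ a.val then
      some ⟨a.val - 1, Nat.lt_of_le_of_lt (Nat.sub_le _ _) a.isLt⟩ else none := by
  unfold ymap
  split <;> simp_all

lemma ypow_apply {n : ℕ} (t : ℕ) (a : Fin n) :
    (ymap n ^ t) a = if h : t ≤ a.val then
      some ⟨a.val - t, Nat.lt_of_le_of_lt (Nat.sub_le _ _) a.isLt⟩ else none := by
  induction t with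
  | zero =>
    rw [pow_zero, dif_pos (Nat.zero_le _)]
    exact congrArg some (Fin.ext rfl)
  | succ t ih =>
    rw [pow_succ, PMap.mul_apply, ih]
    by_cases h : t ≤ a.val
    · rw [dif_pos h]
      show ymap n _ = _
      rw [ymap_apply]
      by_cases h2 : t + 1 ≤ a.val
      · rw [dif_pos (show 1 ≤ (⟨a.val - t, _⟩ : Fin n).val by simp; omega), dif_pos h2]
        exact congrArg some (Fin.ext (by simp; omega))
      · rw [dif_neg (show ¬ (1 ≤ (⟨a.val - t, _⟩ : Fin n).val) by simp; omega), dif_neg h2]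
    · rw [dif_neg h, dif_neg (by omega)]
      rfl

lemma ordPres_one {n : ℕ} : OrdPres (1 : PMap n) := by
  intro a b c d hab hc hd
  rw [PMap.one_apply] at hc hd
  cases hc; cases hd; exact hab

lemma ordPres_mul {n : ℕ} {f g : PMap n} (hf : OrdPres f) (hg : OrdPres g) :
    OrdPres (f * g) := by
  intro a b c d hab hc hd
  rw [PMap.mul_apply] at hc hd
  obtain ⟨c', hc1, hc2⟩ := Option.bind_eq_some_iff.mp hc
  obtain ⟨d', hd1, hd2⟩ := Option.bind_eq_some_iff.mp hd
  exact hg c' d' c d (hf a b c' d' hab hc1 hd1) hc2 hd2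

lemma one_mem_CIn {n : ℕ} : (1 : PMap n) ∈ CIn n :=
  ⟨0, fun a _ => by rw [pow_zero]⟩

lemma mul_mem_CIn {n : ℕ} {f g : PMap n} (hf : f ∈ CIn n) (hg : g ∈ CIn n) :
    f * g ∈ CIn n := by
  obtain ⟨k, hk⟩ := hf
  obtain ⟨l, hl⟩ := hg
  refine ⟨l + k, fun a hne => ?_⟩
  rw [PMap.mul_apply] at hne ⊢
  rcases hfa : f a with _ | b
  · rw [hfa] at hne; exact absurd rfl hne
  · have hfa' := hk a (by rw [hfa]; exact Option.some_ne_none _)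
    rw [hfa, gpow_apply] at hfa'
    have hb : b = (finRotate n)^[k] a := by injection hfa'
    rw [hfa] at hne
    have hgb : g b ≠ none := hne
    have hgb' := hl b hgb
    show g b = _
    rw [hgb', gpow_apply, gpow_apply, hb, ← Function.iterate_add_apply]

def OCInSub (n : ℕ) : Submonoid (PMap n) where
  carrier := OCIn n
  one_mem' := ⟨one_mem_CIn, ordPres_one⟩
  mul_mem' := fun hf hg => ⟨mul_mem_CIn hf.1 hg.1, ordPres_mul hf.2 hg.2⟩

lemma xmap_mem_OCIn {n : ℕ} : xmap n ∈ OCIn n := by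
  constructor
  · refine ⟨1, fun a hne => ?_⟩
    rw [xmap_apply] at hne ⊢
    by_cases h : a.val + 1 < n
    · rw [dif_pos h, pow_one]
      show _ = some (finRotate n a)
      exact congrArg some (Fin.ext (by rw [finRotate_val', Nat.mod_eq_of_lt h])).symm
    · rw [dif_neg h] at hne; exact absurd rfl hne
  · intro a b c d hab hc hd
    rw [xmap_apply] at hc hd
    split at hc
    · split at hd
      · cases hc; cases hd
        rw [Fin.le_def] at hab
        exact Fin.mk_le_mk.mpr (by omega)
      · exact absurd hd (by simp)
    · exact absurd hc (by simp)

lemma ymap_mem_OCIn {n : ℕ} : ymap n ∈ OCIn n := by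
  constructor
  · refine ⟨n - 1, fun a hne => ?_⟩
    rw [ymap_apply] at hne ⊢
    by_cases h : 1 ≤ a.val
    · rw [dif_pos h, gpow_apply]
      refine congrArg some (Fin.ext ?_)
      rw [rot_val]
      have hlt := a.isLt
      have he : a.val + (n - 1) = (a.val - 1) + n := by omega
      rw [he, Nat.add_mod_right, Nat.mod_eq_of_lt (by omega)]
    · rw [dif_neg h] at hne; exact absurd rfl hne
  · intro a b c d hab hc hd
    rw [ymap_apply] at hc hd
    split at hc
    · split at hd
      · cases hc; cases hd
        rw [Fin.le_def] at hab
        exact Fin.mk_le_mk.mpr (by omega)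
      · exact absurd hd (by simp)
    · exact absurd hc (by simp)

lemma emap_mem_OCIn {n i : ℕ} : emap n i ∈ OCIn n := by
  constructor
  · refine ⟨0, fun a hne => ?_⟩
    rw [pow_zero, PMap.one_apply]
    unfold emap at hne ⊢
    split at hne
    · exact absurd rfl hne
    · rw [if_neg (by assumption)]
  · intro a b c d hab hc hd
    unfold emap at hc hd
    split at hc
    · exact absurd hc (by simp)
    · split at hd
      · exact absurd hd (by simp)
      · cases hc; cases hd; exact hab

lemma xy_eq {n : ℕ} : xmap n * ymap n = emap n n := by
  funext a
  rw [PMap.mul_apply, xmap_apply]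
  by_cases h : a.val + 1 < n
  · rw [dif_pos h]
    show ymap n _ = _
    rw [ymap_apply, dif_pos (by simp)]
    unfold emap
    rw [if_neg (by omega)]
    exact congrArg some (Fin.ext (by simp))
  · rw [dif_neg h]
    unfold emap
    rw [if_pos (by have := a.isLt; omega)]
    rfl

lemma yx_eq {n : ℕ} : ymap n * xmap n = emap n 1 := by
  funext a
  rw [PMap.mul_apply, ymap_apply]
  by_cases h : 1 ≤ a.val
  · rw [dif_pos h]
    show xmap n _ = _
    rw [xmap_apply, dif_pos (show (⟨a.val - 1, _⟩ : Fin n).val + 1 < n by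
      have := a.isLt; simp; omega)]
    unfold emap
    rw [if_neg (by omega)]
    exact congrArg some (Fin.ext (by simp; omega))
  · rw [dif_neg h]
    unfold emap
    rw [if_pos (by omega)]
    rfl

/-- The generating set. -/
def genSet (n : ℕ) : Set (PMap n) :=
  {xmap n, ymap n} ∪ {f | ∃ i : ℕ, 2 ≤ i ∧ i ≤ n - 1 ∧ f = emap n i}

lemma x_mem_gen {n : ℕ} : xmap n ∈ genSet n := Or.inl (Or.inl rfl)
lemma y_mem_gen {n : ℕ} : ymap n ∈ genSet n := Or.inl (Or.inr rfl)

lemma emap_mem_closure {n : ℕ} (hn : 2 ≤ n) {j : ℕ} (h1 : 1 ≤ j) (h2 : j ≤ n) :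
    emap n j ∈ Submonoid.closure (genSet n) := by
  rcases eq_or_lt_of_le h1 with rfl | hj1
  · rw [← yx_eq]
    exact mul_mem (Submonoid.subset_closure y_mem_gen) (Submonoid.subset_closure x_mem_gen)
  rcases eq_or_lt_of_le h2 with rfl | hj2
  · rw [← xy_eq]
    exact mul_mem (Submonoid.subset_closure x_mem_gen) (Submonoid.subset_closure y_mem_gen)
  · exact Submonoid.subset_closure (Or.inr ⟨j, by omega, by omega, rfl⟩)

/-- Partial identity with domain the complement of `T`. -/
def pidc {n : ℕ} (T : Finset (Fin n)) : PMap n := fun a => if a ∈ T then none else some a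

lemma pidc_mem_closure {n : ℕ} (hn : 2 ≤ n) (T : Finset (Fin n)) :
    pidc T ∈ Submonoid.closure (genSet n) := by
  induction T using Finset.induction_on with
  | empty =>
    have he : pidc (∅ : Finset (Fin n)) = 1 := by
      funext a
      show (if a ∈ (∅ : Finset (Fin n)) then none else some a) = some a
      simp
    rw [he]; exact one_mem _
  | @insert i T hiT ih =>
    have he : pidc (insert i T) = pidc T * emap n (i.val + 1) := by
      funext a
      rw [PMap.mul_apply]
      by_cases hT : a ∈ T
      · have h1 : pidc T a = none := if_pos hT
        have h2 : pidc (insert i T) a = none := if_pos (Finset.mem_insert_of_mem hT)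
        rw [h1, h2]; rfl
      · have h1 : pidc T a = some a := if_neg hT
        rw [h1]
        show pidc (insert i T) a = emap n (i.val + 1) a
        by_cases hi : a = i
        · subst hi
          have h2 : pidc (insert a T) a = none := if_pos (Finset.mem_insert_self _ _)
          rw [h2]
          unfold emap
          rw [if_pos rfl]
        · have h2 : pidc (insert i T) a = some a := by
            unfold pidc
            rw [if_neg (by simp [hi, hT])]
          rw [h2]
          unfold emap
          rw [if_neg (fun h => hi (Fin.ext (by omega)))]
    rw [he]
    exact mul_mem ih (emap_mem_closure hn (by omega) (by have := i.isLt; omega))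

lemma OCIn_subset_closure {n : ℕ} (hn : 2 ≤ n) :
    OCIn n ⊆ ↑(Submonoid.closure (genSet n)) := by
  rintro f ⟨⟨k, hk⟩, hord⟩
  have hn0 : 0 < n := by omega
  set s := k % n with hs
  have hsn : s < n := Nat.mod_lt _ hn0
  have hval : ∀ a : Fin n, f a ≠ none →
      f a = some ⟨(a.val + s) % n, Nat.mod_lt _ hn0⟩ := by
    intro a ha
    rw [hk a ha, gpow_apply]
    refine congrArg some (Fin.ext ?_)
    rw [rot_val]
    show (a.val + k) % n = (a.val + k % n) % n
    rw [Nat.add_mod_mod]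
  classical
  set T : Finset (Fin n) := Finset.univ.filter (fun a => f a = none) with hT
  have hmemT : ∀ a : Fin n, a ∈ T ↔ f a = none := by
    intro a; simp [hT]
  by_cases hs0 : s = 0
  · have hfe : f = pidc T := by
      funext a
      by_cases ha : f a = none
      · rw [ha]
        exact (if_pos ((hmemT a).mpr ha)).symm
      · rw [hval a ha]
        have h2 : pidc T a = some a := if_neg (fun h => ha ((hmemT a).mp h))
        rw [h2]
        exact congrArg some (Fin.ext (by simp [hs0, Nat.mod_eq_of_lt a.isLt]))
    rw [hfe]
    exact pidc_mem_closure hn T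
  · by_cases hup : ∀ a : Fin n, f a ≠ none → a.val + s < n
    · have hfe : f = pidc T * xmap n ^ s := by
        funext a
        rw [PMap.mul_apply]
        by_cases ha : f a = none
        · have hp : pidc T a = none := if_pos ((hmemT a).mpr ha)
          rw [ha, hp]
          rfl
        · have hlt := hup a ha
          have hp : pidc T a = some a := if_neg (fun h => ha ((hmemT a).mp h))
          rw [hval a ha, hp]
          show _ = (xmap n ^ s) a
          rw [xpow_apply, dif_pos hlt]
          exact congrArg some (Fin.ext (by simp [Nat.mod_eq_of_lt hlt]))
      rw [hfe]
      exact mul_mem (pidc_mem_closure hn T)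
        (pow_mem (Submonoid.subset_closure x_mem_gen) s)
    · push_neg at hup
      obtain ⟨a0, ha0, ha0n⟩ := hup
      have hdown : ∀ a : Fin n, f a ≠ none → n ≤ a.val + s := by
        intro b hb
        by_contra hbn
        push_neg at hbn
        have hba : b ≤ a0 := by rw [Fin.le_def]; have := a0.isLt; omega
        have hle := hord b a0 _ _ hba (hval b hb) (hval a0 ha0)
        rw [Fin.le_def] at hle
        simp only at hle
        have e1 : (b.val + s) % n = b.val + s := Nat.mod_eq_of_lt hbn
        have e2 : (a0.val + s) % n = a0.val + s - n := by
          rw [Nat.mod_eq_sub_mod (by omega), Nat.mod_eq_of_lt (by have := a0.isLt; omega)]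
        rw [e1, e2] at hle
        have := a0.isLt
        omega
      have hfe : f = pidc T * ymap n ^ (n - s) := by
        funext a
        rw [PMap.mul_apply]
        by_cases ha : f a = none
        · have hp : pidc T a = none := if_pos ((hmemT a).mpr ha)
          rw [ha, hp]
          rfl
        · have hge := hdown a ha
          have hp : pidc T a = some a := if_neg (fun h => ha ((hmemT a).mp h))
          rw [hval a ha, hp]
          show _ = (ymap n ^ (n - s)) a
          rw [ypow_apply, dif_pos (by omega)]
          refine congrArg some (Fin.ext ?_)
          show (a.val + s) % n = a.val - (n - s)
          rw [Nat.mod_eq_sub_mod hge, Nat.mod_eq_of_lt (by have := a.isLt; omega)]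
          omega
      rw [hfe]
      exact mul_mem (pidc_mem_closure hn T)
        (pow_mem (Submonoid.subset_closure y_mem_gen) _)

lemma closure_subset_OCIn {n : ℕ} :
    ↑(Submonoid.closure (genSet n)) ⊆ OCIn n := by
  have h : Submonoid.closure (genSet n) ≤ OCInSub n := by
    rw [Submonoid.closure_le]
    rintro f (hf | ⟨i, _, _, rfl⟩)
    · rcases hf with rfl | rfl
      · exact xmap_mem_OCIn
      · exact ymap_mem_OCIn
    · exact emap_mem_OCIn
  exact h

lemma emap_injOn {n : ℕ} (hn : 2 ≤ n) :
    Set.InjOn (fun i => emap n i) (Set.Icc 2 (n - 1)) := by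
  rintro i ⟨hi2, hi1⟩ j ⟨hj2, hj1⟩ h
  have hlt : i - 1 < n := by omega
  have hthis := congrFun h ⟨i - 1, hlt⟩
  simp only [emap] at hthis
  rw [if_pos (show (⟨i - 1, hlt⟩ : Fin n).val + 1 = i by simp; omega)] at hthis
  split at hthis
  · simp only [Fin.val_mk] at *
    omega
  · exact absurd hthis (by simp)

lemma xmap_ne_ymap {n : ℕ} (hn : 2 ≤ n) : xmap n ≠ ymap n := by
  intro h
  have h0 := congrFun h ⟨0, by omega⟩
  rw [xmap_apply, ymap_apply] at h0
  rw [dif_pos (show (⟨0, by omega⟩ : Fin n).val + 1 < n by simp; omega),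
    dif_neg (by simp)] at h0
  exact absurd h0 (by simp)

lemma genSet_ncard {n : ℕ} (hn : 2 ≤ n) : (genSet n).ncard = n := by
  have hBeq : {f : PMap n | ∃ i : ℕ, 2 ≤ i ∧ i ≤ n - 1 ∧ f = emap n i} =
      (fun i => emap n i) '' Set.Icc 2 (n - 1) := by
    ext f
    constructor
    · rintro ⟨i, h1, h2, rfl⟩
      exact ⟨i, ⟨h1, h2⟩, rfl⟩
    · rintro ⟨i, ⟨h1, h2⟩, rfl⟩
      exact ⟨i, h1, h2, rfl⟩
  have hB : {f : PMap n | ∃ i : ℕ, 2 ≤ i ∧ i ≤ n - 1 ∧ f = emap n i}.ncard = n - 2 := by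
    rw [hBeq, Set.ncard_image_of_injOn (emap_injOn hn), ← Finset.coe_Icc,
      Set.ncard_coe_finset, Nat.card_Icc]
    omega
  have hA : ({xmap n, ymap n} : Set (PMap n)).ncard = 2 := Set.ncard_pair (xmap_ne_ymap hn)
  have hdisj : Disjoint ({xmap n, ymap n} : Set (PMap n))
      {f : PMap n | ∃ i : ℕ, 2 ≤ i ∧ i ≤ n - 1 ∧ f = emap n i} := by
    rw [Set.disjoint_left]
    rintro f (rfl | rfl) ⟨i, hi2, hi1, heq⟩
    · have h0 := congrFun heq ⟨0, by omega⟩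
      rw [xmap_apply, dif_pos (show (⟨0, by omega⟩ : Fin n).val + 1 < n by simp; omega)] at h0
      unfold emap at h0
      split at h0
      · exact absurd h0 (by simp)
      · have := congrArg (fun o => Option.map Fin.val o) h0
        simp at this
    · have h0 := congrFun heq ⟨1, by omega⟩
      rw [ymap_apply, dif_pos (by simp)] at h0
      unfold emap at h0
      split at h0
      · exact absurd h0 (by simp)
      · have := congrArg (fun o => Option.map Fin.val o) h0
        simp at this
  rw [genSet, Set.ncard_union_eq hdisj (Set.toFinite _) (Set.toFinite _), hA, hB]
  omega

end Aux

/-- For `n ≥ 2`, the set `{x, y, e_2, …, e_{n-1}}`, which has `n`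
elements, generates the monoid `OCI_n`; in particular `xy = e_n` and `yx = e_1`. -/
theorem OCIn.generators (n : ℕ) (hn : 2 ≤ n) :
    ({xmap n, ymap n} ∪ {f | ∃ i : ℕ, 2 ≤ i ∧ i ≤ n - 1 ∧ f = emap n i}).ncard = n ∧
    (Submonoid.closure ({xmap n, ymap n} ∪ {f | ∃ i : ℕ, 2 ≤ i ∧ i ≤ n - 1 ∧ f = emap n i}) :
        Set (PMap n)) = OCIn n ∧
    xmap n * ymap n = emap n n ∧ ymap n * xmap n = emap n 1 := by
  refine ⟨genSet_ncard hn, ?_, xy_eq, yx_eq⟩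
  exact Set.Subset.antisymm closure_subset_OCIn (OCIn_subset_closure hn)
end

section
/- In the free monoid C* on the alphabet C = {x, y, e_1, …, e_n}, the relations x^j e_i = x^j = e_{n−i+1} x^j and e_i y^j = y^j = y^j e_{n−i+1}, for all 1 ≤ i ≤ j ≤ n, are consequences of the relations U_2 through U_5. -/
/-! The alphabet `C = {x, y, e_1, …, e_n}` (with `n + 2` letters), modelled as
`Bool ⊕ Fin n`: `.inl false` is the letter `x`, `.inl true` is the letter `y`,
and `.inr i` is the letter `e_{i+1}`. -/

/-- The free monoid on the alphabet `C = {x, y, e_1, …, e_n}`. -/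
abbrev Cw (n : ℕ) := FreeMonoid (Bool ⊕ Fin n)

/-- The letter `x`. -/
def Cx (n : ℕ) : Cw n := FreeMonoid.of (Sum.inl false)

/-- The letter `y`. -/
def Cy (n : ℕ) : Cw n := FreeMonoid.of (Sum.inl true)

/-- The letter `e_{i+1}` (so `Ce ⟨0,_⟩ = e_1`, …, `Ce ⟨n-1,_⟩ = e_n`). -/
def Ce {n : ℕ} (i : Fin n) : Cw n := FreeMonoid.of (Sum.inr i)

/-- The word `e_1 e_2 ⋯ e_n`. -/
def CeProd (n : ℕ) : Cw n := ((List.finRange n).map Ce).prod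

/-- The word `e_2 ⋯ e_n`. -/
def CeProdTail (n : ℕ) : Cw n := (((List.finRange n).drop 1).map Ce).prod

/-- The relations `U_2` to `U_5` of the paper (in `0`-based indexing of the letters `e`):
`(U_2) xy = e_n` and `yx = e_1`; `(U_3) x e_1 = x` and `e_1 y = y`;
`(U_4) e_i e_j = e_j e_i` for `i < j`; `(U_5) x e_{i+1} = e_i x` for `1 ≤ i ≤ n-1`. -/
inductive Urel2345 (n : ℕ) : Cw n → Cw n → Prop
  | u2a (j : Fin n) : (j : ℕ) = n - 1 → Urel2345 n (Cx n * Cy n) (Ce j)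
  | u2b (i : Fin n) : (i : ℕ) = 0 → Urel2345 n (Cy n * Cx n) (Ce i)
  | u3a (i : Fin n) : (i : ℕ) = 0 → Urel2345 n (Cx n * Ce i) (Cx n)
  | u3b (i : Fin n) : (i : ℕ) = 0 → Urel2345 n (Ce i * Cy n) (Cy n)
  | u4 (i j : Fin n) : i < j → Urel2345 n (Ce i * Ce j) (Ce j * Ce i)
  | u5 (i j : Fin n) : (i : ℕ) + 1 = (j : ℕ) → Urel2345 n (Cx n * Ce j) (Ce i * Cx n)

/-! Each relation `x^j e_i = x^j` etc. follows from the case `j = i` by splitting off a power.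
Along `x`, the case `j = i` is a chain of `U_5` moves ending in `x e_1 = x` (resp. `e_n x = x`,
which is `U_2` + `U_3`). Along `y`, `U_5` is transported through `xy = e_n` and `yx = e_1`, giving
`e_{k+1} y = y e_k e_n` and `y e_k = e_1 e_{k+1} y`, which together with `y e_n = y`,
`e_1 y = y` and `U_4` drive the same induction. -/

/-- The relations `U_2`–`U_5` between elements `x`, `y`, `e_1 = e 0`, …, `e_n = e (Fin.last m)`
of a monoid, where `n = m + 1`. -/
structure SatisfiesU2345 {M : Type*} [Monoid M] (m : ℕ) (x y : M) (e : Fin (m + 1) → M) :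
    Prop where
  x_mul_y : x * y = e (Fin.last m)
  y_mul_x : y * x = e 0
  x_mul_e_zero : x * e 0 = x
  e_zero_mul_y : e 0 * y = y
  commute_e : ∀ i j, Commute (e i) (e j)
  x_mul_e_succ : ∀ k : Fin m, x * e k.succ = e k.castSucc * x

theorem pow_mul_eq_pow_of_le {M : Type*} [Monoid M] {a b : M} {i j : ℕ}
    (h : a ^ i * b = a ^ i) (hij : i ≤ j) : a ^ j * b = a ^ j := by
  obtain ⟨d, rfl⟩ := Nat.exists_eq_add_of_le' hij
  rw [pow_add, mul_assoc, h]

theorem mul_pow_eq_pow_of_le {M : Type*} [Monoid M] {a b : M} {i j : ℕ}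
    (h : b * a ^ i = a ^ i) (hij : i ≤ j) : b * a ^ j = a ^ j := by
  obtain ⟨d, rfl⟩ := Nat.exists_eq_add_of_le hij
  rw [pow_add, ← mul_assoc, h]

namespace SatisfiesU2345

variable {M : Type*} [Monoid M] {m : ℕ} {x y : M} {e : Fin (m + 1) → M}
  (h : SatisfiesU2345 m x y e)
include h

theorem e_last_mul_x : e (Fin.last m) * x = x := by
  rw [← h.x_mul_y, mul_assoc, h.y_mul_x, h.x_mul_e_zero]

theorem y_mul_e_last : y * e (Fin.last m) = y := by
  rw [← h.x_mul_y, ← mul_assoc, h.y_mul_x, h.e_zero_mul_y]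

theorem e_succ_mul_y (k : Fin m) : e k.succ * y = y * e k.castSucc * e (Fin.last m) :=
  calc e k.succ * y = e k.succ * (e 0 * y) := by rw [h.e_zero_mul_y]
    _ = y * (x * e k.succ) * y := by
      rw [← mul_assoc, (h.commute_e _ _).eq, ← h.y_mul_x, mul_assoc y]
    _ = y * e k.castSucc * e (Fin.last m) := by
      rw [h.x_mul_e_succ, ← mul_assoc, mul_assoc _ x, h.x_mul_y]

theorem y_mul_e_castSucc (k : Fin m) : y * e k.castSucc = e 0 * e k.succ * y :=
  calc y * e k.castSucc = y * (e k.castSucc * (x * y)) := by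
        rw [h.x_mul_y, (h.commute_e _ _).eq, ← mul_assoc, h.y_mul_e_last]
    _ = y * x * e k.succ * y := by
      rw [← mul_assoc (e _), ← h.x_mul_e_succ]; simp only [mul_assoc]
    _ = e 0 * e k.succ * y := by rw [h.y_mul_x]

theorem x_pow_mul_e_self (k : Fin (m + 1)) : x ^ ((k : ℕ) + 1) * e k = x ^ ((k : ℕ) + 1) := by
  induction k using Fin.induction with
  | zero => simpa using h.x_mul_e_zero
  | succ k ih =>
    rw [Fin.val_castSucc] at ih
    rw [Fin.val_succ, pow_succ, mul_assoc, h.x_mul_e_succ, ← mul_assoc, ih]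

theorem e_rev_mul_x_pow (k : Fin (m + 1)) :
    e k.rev * x ^ ((k : ℕ) + 1) = x ^ ((k : ℕ) + 1) := by
  induction k using Fin.induction with
  | zero => simpa using h.e_last_mul_x
  | succ k ih =>
    rw [Fin.rev_castSucc, Fin.val_castSucc] at ih
    rw [Fin.val_succ, pow_succ', ← mul_assoc, Fin.rev_succ, ← h.x_mul_e_succ, mul_assoc, ih]

theorem e_mul_y_pow_self (k : Fin (m + 1)) : e k * y ^ ((k : ℕ) + 1) = y ^ ((k : ℕ) + 1) := by
  induction k using Fin.induction with
  | zero => simpa using h.e_zero_mul_y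
  | succ k ih =>
    rw [Fin.val_castSucc] at ih
    rw [Fin.val_succ, pow_succ' y (k + 1), ← mul_assoc, h.e_succ_mul_y, mul_assoc _ _ (e _),
      (h.commute_e _ _).eq, ← mul_assoc, mul_assoc, ih, h.y_mul_e_last]

theorem y_pow_mul_e_rev (k : Fin (m + 1)) :
    y ^ ((k : ℕ) + 1) * e k.rev = y ^ ((k : ℕ) + 1) := by
  induction k using Fin.induction with
  | zero => simpa using h.y_mul_e_last
  | succ k ih =>
    rw [Fin.rev_castSucc, Fin.val_castSucc] at ih
    rw [Fin.val_succ, pow_succ y (k + 1), mul_assoc, Fin.rev_succ, h.y_mul_e_castSucc,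
      (h.commute_e _ _).eq, mul_assoc, h.e_zero_mul_y, ← mul_assoc, ih]

end SatisfiesU2345

theorem Urel2345.mk'_eq {n : ℕ} {a b : Cw n} (h : Urel2345 n a b) :
    (conGen (Urel2345 n)).mk' a = (conGen (Urel2345 n)).mk' b :=
  (Con.eq _).2 (ConGen.Rel.of _ _ h)

theorem Urel2345.satisfiesU2345_mk' (m : ℕ) :
    SatisfiesU2345 m ((conGen (Urel2345 (m + 1))).mk' (Cx _))
      ((conGen (Urel2345 (m + 1))).mk' (Cy _)) (fun k ↦ (conGen (Urel2345 (m + 1))).mk' (Ce k))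
    where
  x_mul_y := by simpa using mk'_eq (.u2a (Fin.last m) rfl)
  y_mul_x := by simpa using mk'_eq (.u2b 0 rfl)
  x_mul_e_zero := by simpa using mk'_eq (.u3a 0 rfl)
  e_zero_mul_y := by simpa using mk'_eq (.u3b 0 rfl)
  commute_e i j := by
    rcases lt_trichotomy i j with hij | rfl | hij
    · simpa [commute_iff_eq] using mk'_eq (.u4 i j hij)
    · rfl
    · simpa [commute_iff_eq] using (mk'_eq (.u4 j i hij)).symm
  x_mul_e_succ k := by simpa using mk'_eq (.u5 k.castSucc k.succ rfl)

/-- For `1 ≤ i ≤ j ≤ n`, the relations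
`x^j e_i = x^j = e_{n-i+1} x^j` and `e_i y^j = y^j = y^j e_{n-i+1}` are consequences of
the relations `U_2`–`U_5` (here the letter `e_i` is `Ce ⟨i-1,_⟩` and the letter
`e_{n-i+1}` is `Ce ⟨n-i,_⟩`, in `0`-based indexing). -/
theorem Urel2345.consequence_pow (n : ℕ) (hn : 1 ≤ n) (i j : ℕ) (h1 : 1 ≤ i)
    (h2 : i ≤ j) (h3 : j ≤ n) :
    conGen (Urel2345 n) (Cx n ^ j * Ce ⟨i - 1, by omega⟩) (Cx n ^ j) ∧
    conGen (Urel2345 n) (Ce ⟨n - i, by omega⟩ * Cx n ^ j) (Cx n ^ j) ∧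
    conGen (Urel2345 n) (Ce ⟨i - 1, by omega⟩ * Cy n ^ j) (Cy n ^ j) ∧
    conGen (Urel2345 n) (Cy n ^ j * Ce ⟨n - i, by omega⟩) (Cy n ^ j) := by
  obtain ⟨m, rfl⟩ := Nat.exists_eq_add_of_le' hn
  set k : Fin (m + 1) := ⟨i - 1, by omega⟩
  have hrev : (⟨m + 1 - i, by omega⟩ : Fin (m + 1)) = k.rev := by ext; simp [k]; omega
  have hk : (k : ℕ) + 1 ≤ j := by simp [k]; omega
  have h := satisfiesU2345_mk' m
  rw [hrev]
  simp only [← Con.eq, ← Con.coe_mk', map_mul, map_pow]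
  exact ⟨pow_mul_eq_pow_of_le (h.x_pow_mul_e_self k) hk,
    mul_pow_eq_pow_of_le (h.e_rev_mul_x_pow k) hk,
    mul_pow_eq_pow_of_le (h.e_mul_y_pow_self k) hk,
    pow_mul_eq_pow_of_le (h.y_pow_mul_e_rev k) hk⟩
end
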